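/- Let m, n, k be positive integers with k ≤ n and let X ∈ M_m ⊗ M_n be Hermitian. Then sup{ |⟨v, X v⟩| : v a unit vector in ℂ^m ⊗ ℂ^n with SR(v) ≤ k } = sup{ |⟨v, X w⟩| : v, w unit vectors in ℂ^m ⊗ ℂ^n with SR(v) ≤ k, SR(w) ≤ k, and there exists P ∈ M_m with (P ⊗ I_n) v = w }. (This is the key equality established in the proof of Theorem 5.2 for Hermitian operators.) -/

import Mathlib

open scoped ComplexOrder Kronecker
open Matrix

noncomputable section

/-- The standard inner product `⟨v, w⟩ = ∑ conj(vᵢ) wᵢ` on `I → ℂ`. -/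
def inprod {I : Type*} [Fintype I] (v w : I → ℂ) : ℂ :=
  ∑ i, (starRingEnd ℂ) (v i) * w i

/-- `v` is a unit vector. -/
def UnitVec {I : Type*} [Fintype I] (v : I → ℂ) : Prop :=
  inprod v v = 1

/-- The Schmidt rank of a vector in `ℂ^I ⊗ ℂ^J`, i.e. the rank of the associated
`I × J` coefficient matrix. -/
noncomputable def SchmidtRank {I J : Type*} [Fintype I] [Fintype J] (v : I × J → ℂ) : ℕ :=
  (Matrix.of fun i j => v (i, j)).rank

/-- The operator norm (largest singular value) of a matrix, as
`sup { |⟨v, A w⟩| : v, w unit vectors }`. -/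
noncomputable def opNorm {I J : Type*} [Fintype I] [Fintype J] (A : Matrix I J ℂ) : ℝ :=
  sSup { t : ℝ | ∃ v w, UnitVec v ∧ UnitVec w ∧ t = ‖inprod v (A.mulVec w)‖ }

/-- The `S(k)`-norm of `X ∈ M_I ⊗ M_J`. -/
noncomputable def SNorm {I J : Type*} [Fintype I] [Fintype J] (k : ℕ)
    (X : Matrix (I × J) (I × J) ℂ) : ℝ :=
  sSup { t : ℝ | ∃ v w : I × J → ℂ, UnitVec v ∧ UnitVec w ∧
    SchmidtRank v ≤ k ∧ SchmidtRank w ≤ k ∧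
    t = ‖inprod v (X.mulVec w)‖ }

/-- `X` is a `k`-block positive (Hermitian) operator: `⟨v, X v⟩ ≥ 0` for every
vector of Schmidt rank at most `k`. -/
def kBlockPos {I J : Type*} [Fintype I] [Fintype J] (k : ℕ)
    (X : Matrix (I × J) (I × J) ℂ) : Prop :=
  X.IsHermitian ∧ ∀ v : I × J → ℂ, SchmidtRank v ≤ k → 0 ≤ inprod v (X.mulVec v)

/-- `ρ` has Schmidt number at most `k` (in particular it is positive semidefinite):
it is a finite nonnegative combination of rank-one projections onto vectors of
Schmidt rank at most `k`. -/
def SchmidtNumberLE {I J : Type*} [Fintype I] [Fintype J] (k : ℕ)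
    (ρ : Matrix (I × J) (I × J) ℂ) : Prop :=
  ∃ (N : ℕ) (c : Fin N → ℝ) (v : Fin N → (I × J → ℂ)),
    (∀ i, 0 ≤ c i) ∧ (∀ i, SchmidtRank (v i) ≤ k) ∧
    ρ = ∑ i, (c i : ℂ) • Matrix.vecMulVec (v i) (star (v i))

/-- `id_I ⊗ Φ` : the map applying `Φ` to the second tensor factor. -/
noncomputable def tensorId {I : Type*} [Fintype I] {a b : ℕ}
    (Φ : Matrix (Fin a) (Fin a) ℂ →ₗ[ℂ] Matrix (Fin b) (Fin b) ℂ)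
    (X : Matrix (I × Fin a) (I × Fin a) ℂ) : Matrix (I × Fin b) (I × Fin b) ℂ :=
  Matrix.of fun p q => Φ (Matrix.of fun s t => X (p.1, s) (q.1, t)) p.2 q.2

/-- The trace norm `‖X‖_tr = Tr √(X^* X)`. -/
noncomputable def trNorm {I : Type*} [Fintype I] [DecidableEq I] (X : Matrix I I ℂ) : ℝ :=
  ((Matrix.posSemidef_conjTranspose_mul_self X).1.eigenvectorUnitary.1 *
    Matrix.diagonal ((fun x : ℝ => (x : ℂ)) ∘ (√·) ∘ (Matrix.posSemidef_conjTranspose_mul_self X).1.eigenvalues) *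
    (star (Matrix.posSemidef_conjTranspose_mul_self X).1.eigenvectorUnitary : Matrix I I ℂ)).trace.re

/-!
Taking `P = 1` shows that the first supremum is at most the second. Conversely, let `S` be the
first supremum and `w = (P ⊗ I) v`. Every vector of `span {v, w}` is `((a • 1 + b • P) ⊗ I) v`,
so it has Schmidt rank at most `SR(v) ≤ k`, and by homogeneity `|⟨u, X u⟩| ≤ ‖u‖² S` on that span.
For Hermitian `X`, polarization gives
`4 Re ⟨v, X w⟩ = ⟨v + w, X (v + w)⟩ - ⟨v - w, X (v - w)⟩ ≤ (‖v + w‖² + ‖v - w‖²) S = 4 S`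
by the parallelogram law, and multiplying `v` by a unimodular phase turns `Re` into `|·|`.
-/

section Inprod

variable {I : Type*} [Fintype I]

theorem inprod_eq_star_dotProduct (v w : I → ℂ) : inprod v w = star v ⬝ᵥ w := rfl

theorem inprod_self_eq_sum_norm_sq (v : I → ℂ) : inprod v v = ((∑ i, ‖v i‖ ^ 2 : ℝ) : ℂ) := by
  simp [inprod, Complex.conj_mul']

theorem inprod_smul_smul (c : ℂ) (v w : I → ℂ) :
    inprod (c • v) (c • w) = ((‖c‖ ^ 2 : ℝ) : ℂ) * inprod v w := by
  simp only [inprod_eq_star_dotProduct, star_smul, smul_dotProduct, dotProduct_smul, smul_eq_mul,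
    ← mul_assoc, Complex.star_def, Complex.mul_conj']
  push_cast; ring

theorem inprod_parallelogram_law (v w : I → ℂ) :
    inprod (v + w) (v + w) + inprod (v - w) (v - w) = 2 * (inprod v v + inprod w w) := by
  simp only [inprod_eq_star_dotProduct, star_add, star_sub, add_dotProduct, dotProduct_add,
    sub_dotProduct, dotProduct_sub]
  ring

theorem inprod_mulVec_polarization (X : Matrix I I ℂ) (v w : I → ℂ) :
    inprod (v + w) (X *ᵥ (v + w)) - inprod (v - w) (X *ᵥ (v - w)) =
      2 * (inprod v (X *ᵥ w) + inprod w (X *ᵥ v)) := by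
  simp only [inprod_eq_star_dotProduct, star_add, star_sub, mulVec_add, mulVec_sub,
    add_dotProduct, dotProduct_add, sub_dotProduct, dotProduct_sub]
  ring

theorem inprod_mulVec_swap_of_isHermitian {X : Matrix I I ℂ} (hX : X.IsHermitian) (v w : I → ℂ) :
    inprod w (X *ᵥ v) = starRingEnd ℂ (inprod v (X *ᵥ w)) := by
  rw [inprod_eq_star_dotProduct, inprod_eq_star_dotProduct, star_dotProduct, star_mulVec,
    ← dotProduct_mulVec, hX.eq, Complex.star_def]

theorem UnitVec.norm_apply_le_one {v : I → ℂ} (hv : UnitVec v) (i : I) : ‖v i‖ ≤ 1 := by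
  have hsum : ∑ j, ‖v j‖ ^ 2 = 1 := by
    exact_mod_cast (inprod_self_eq_sum_norm_sq v).symm.trans hv
  have : ‖v i‖ ^ 2 ≤ 1 :=
    hsum ▸ Finset.single_le_sum (fun j _ => sq_nonneg ‖v j‖) (Finset.mem_univ i)
  exact (sq_le_one_iff₀ (norm_nonneg _)).mp this

theorem norm_inprod_mulVec_le_sum_norm (X : Matrix I I ℂ) {v w : I → ℂ} (hv : UnitVec v)
    (hw : UnitVec w) :
    ‖inprod v (X *ᵥ w)‖ ≤ ∑ i, ∑ j, ‖X i j‖ := by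
  refine (norm_sum_le _ _).trans (Finset.sum_le_sum fun i _ => ?_)
  rw [norm_mul, Complex.norm_conj]
  refine (mul_le_of_le_one_left (norm_nonneg _) (hv.norm_apply_le_one i)).trans
    ((norm_sum_le _ _).trans ?_)
  refine Finset.sum_le_sum fun j _ => ?_
  rw [norm_mul]
  exact mul_le_of_le_one_right (norm_nonneg _) (hw.norm_apply_le_one j)

theorem exists_norm_eq_one_conj_mul_eq_norm (z : ℂ) :
    ∃ c : ℂ, ‖c‖ = 1 ∧ starRingEnd ℂ c * z = ‖z‖ := by
  rcases eq_or_ne z 0 with rfl | hz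
  · exact ⟨1, by simp⟩
  refine ⟨z / ‖z‖, by simp [hz], ?_⟩
  rw [map_div₀, Complex.conj_ofReal, div_mul_eq_mul_div, Complex.conj_mul', sq]
  field_simp

theorem norm_inprod_mulVec_self_le_mul_sSup (X : Matrix I I ℂ) {p : (I → ℂ) → Prop}
    (hp : ∀ (c : ℂ) u, p u → p (c • u))
    (hbdd : BddAbove {t : ℝ | ∃ v, UnitVec v ∧ p v ∧ t = ‖inprod v (X *ᵥ v)‖})
    {u : I → ℂ} (hu : p u) :
    ‖inprod u (X *ᵥ u)‖ ≤
      (inprod u u).re * sSup {t : ℝ | ∃ v, UnitVec v ∧ p v ∧ t = ‖inprod v (X *ᵥ v)‖} := by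
  set r := ∑ i, ‖u i‖ ^ 2
  have hr : inprod u u = r := inprod_self_eq_sum_norm_sq u
  have hr_nonneg : 0 ≤ r := Finset.sum_nonneg fun i _ => sq_nonneg ‖u i‖
  rcases hr_nonneg.eq_or_lt with hr0 | hr0
  · have : u = 0 := by
      rw [← dotProduct_star_self_eq_zero, ← inprod_eq_star_dotProduct, hr, ← hr0,
        Complex.ofReal_zero]
    simp [this, inprod]
  set c : ℂ := (((√r)⁻¹ : ℝ) : ℂ)
  have hc : ‖c‖ ^ 2 = r⁻¹ := by
    rw [Complex.norm_real, Real.norm_eq_abs, sq_abs, inv_pow, Real.sq_sqrt hr0.le]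
  have hunit : UnitVec (c • u) := by
    rw [UnitVec, inprod_smul_smul, hc, hr, ← Complex.ofReal_mul, inv_mul_cancel₀ hr0.ne',
      Complex.ofReal_one]
  have hle := le_csSup hbdd ⟨c • u, hunit, hp c u hu, rfl⟩
  rw [mulVec_smul, inprod_smul_smul, hc, norm_mul, Complex.norm_real, Real.norm_eq_abs,
    abs_of_pos (inv_pos.mpr hr0)] at hle
  rw [hr, Complex.ofReal_re]
  calc ‖inprod u (X *ᵥ u)‖ = r * (r⁻¹ * ‖inprod u (X *ᵥ u)‖) := by field_simp
    _ ≤ r * _ := by gcongr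

theorem re_inprod_mulVec_le_of_forall_mem_span {X : Matrix I I ℂ} (hX : X.IsHermitian)
    {v w : I → ℂ} (hv : UnitVec v) (hw : UnitVec w) {S : ℝ}
    (hS : ∀ u ∈ Submodule.span ℂ {v, w}, ‖inprod u (X *ᵥ u)‖ ≤ (inprod u u).re * S) :
    (inprod v (X *ᵥ w)).re ≤ S := by
  have hv_mem : v ∈ Submodule.span ℂ {v, w} := Submodule.subset_span (by simp)
  have hw_mem : w ∈ Submodule.span ℂ {v, w} := Submodule.subset_span (by simp)
  have hplus := hS _ (Submodule.add_mem _ hv_mem hw_mem)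
  have hminus := hS _ (Submodule.sub_mem _ hv_mem hw_mem)
  have hpolar := congrArg Complex.re (inprod_mulVec_polarization X v w)
  have hpar := congrArg Complex.re (inprod_parallelogram_law v w)
  rw [inprod_mulVec_swap_of_isHermitian hX v w] at hpolar
  rw [hv, hw] at hpar
  norm_num [Complex.mul_re] at hpolar hpar
  have hsum : (inprod (v + w) (v + w)).re * S + (inprod (v - w) (v - w)).re * S = 4 * S := by
    rw [← add_mul, hpar]
  linarith [Complex.re_le_norm (inprod (v + w) (X *ᵥ (v + w))),
    (abs_le.mp (Complex.abs_re_le_norm (inprod (v - w) (X *ᵥ (v - w))))).1]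

theorem norm_inprod_mulVec_le_of_forall_mem_span {X : Matrix I I ℂ} (hX : X.IsHermitian)
    {v w : I → ℂ} (hv : UnitVec v) (hw : UnitVec w) {S : ℝ}
    (hS : ∀ u ∈ Submodule.span ℂ {v, w}, ‖inprod u (X *ᵥ u)‖ ≤ (inprod u u).re * S) :
    ‖inprod v (X *ᵥ w)‖ ≤ S := by
  obtain ⟨c, hc, hcα⟩ := exists_norm_eq_one_conj_mul_eq_norm (inprod v (X *ᵥ w))
  have hcv : UnitVec (c • v) := by rw [UnitVec, inprod_smul_smul, hc, hv]; simp
  have hspan : Submodule.span ℂ {c • v, w} ≤ Submodule.span ℂ {v, w} :=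
    Submodule.span_le.mpr <| Set.insert_subset
      (Submodule.smul_mem _ c (Submodule.subset_span (by simp)))
      (Set.singleton_subset_iff.mpr (Submodule.subset_span (by simp)))
  have := re_inprod_mulVec_le_of_forall_mem_span hX hcv hw fun u hu => hS u (hspan hu)
  rwa [inprod_eq_star_dotProduct, star_smul, smul_dotProduct, ← inprod_eq_star_dotProduct,
    smul_eq_mul, Complex.star_def, hcα, Complex.ofReal_re] at this

end Inprod

section SchmidtRank

variable {I J : Type*} [Fintype I] [Fintype J] [DecidableEq J]

theorem schmidtRank_kronecker_one_mulVec_le (P : Matrix I I ℂ) (v : I × J → ℂ) :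
    SchmidtRank ((P ⊗ₖ (1 : Matrix J J ℂ)) *ᵥ v) ≤ SchmidtRank v := by
  have hcoeff : (Matrix.of fun i j => ((P ⊗ₖ (1 : Matrix J J ℂ)) *ᵥ v) (i, j)) =
      P * Matrix.of fun i j => v (i, j) := by
    ext i j
    simp [mulVec, dotProduct, mul_apply, Fintype.sum_prod_type, one_apply]
  unfold SchmidtRank
  rw [hcoeff]
  exact rank_mul_le_right _ _

theorem schmidtRank_smul_le [DecidableEq I] (c : ℂ) (v : I × J → ℂ) :
    SchmidtRank (c • v) ≤ SchmidtRank v := by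
  simpa [smul_kronecker, smul_mulVec] using
    schmidtRank_kronecker_one_mulVec_le (c • 1 : Matrix I I ℂ) v

theorem schmidtRank_le_of_mem_span_kronecker_one_mulVec [DecidableEq I] {P : Matrix I I ℂ}
    {v u : I × J → ℂ}
    (hu : u ∈ Submodule.span ℂ {v, (P ⊗ₖ (1 : Matrix J J ℂ)) *ᵥ v}) :
    SchmidtRank u ≤ SchmidtRank v := by
  obtain ⟨a, b, rfl⟩ := Submodule.mem_span_pair.mp hu
  have : a • v + b • (P ⊗ₖ (1 : Matrix J J ℂ)) *ᵥ v =
      ((a • 1 + b • P) ⊗ₖ (1 : Matrix J J ℂ)) *ᵥ v := by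
    simp [add_kronecker, smul_kronecker, add_mulVec, smul_mulVec]
  rw [this]
  exact schmidtRank_kronecker_one_mulVec_le _ _

end SchmidtRank

theorem hermitian_sup_diag_eq_sup_related_general (m n k : ℕ)
    (X : Matrix (Fin m × Fin n) (Fin m × Fin n) ℂ) (hX : X.IsHermitian) :
    sSup { t : ℝ | ∃ v : Fin m × Fin n → ℂ, UnitVec v ∧ SchmidtRank v ≤ k ∧
        t = ‖inprod v (X.mulVec v)‖ } =
      sSup { t : ℝ | ∃ v w : Fin m × Fin n → ℂ, UnitVec v ∧ UnitVec w ∧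
        SchmidtRank v ≤ k ∧ SchmidtRank w ≤ k ∧
        (∃ P : Matrix (Fin m) (Fin m) ℂ,
          (P ⊗ₖ (1 : Matrix (Fin n) (Fin n) ℂ)).mulVec v = w) ∧
        t = ‖inprod v (X.mulVec w)‖ } := by
  apply le_antisymm
  · refine Real.sSup_le ?_ (Real.sSup_nonneg (by rintro _ ⟨v, w, -, -, -, -, -, rfl⟩; positivity))
    rintro _ ⟨v, hv, hvk, rfl⟩
    refine le_csSup ⟨∑ i, ∑ j, ‖X i j‖, ?_⟩ ⟨v, v, hv, hv, hvk, hvk, ⟨1, by simp⟩, rfl⟩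
    rintro _ ⟨v, w, hv, hw, -, -, -, rfl⟩
    exact norm_inprod_mulVec_le_sum_norm X hv hw
  · refine Real.sSup_le ?_ (Real.sSup_nonneg (by rintro _ ⟨v, -, -, rfl⟩; positivity))
    rintro _ ⟨v, w, hv, hw, hvk, -, ⟨P, rfl⟩, rfl⟩
    refine norm_inprod_mulVec_le_of_forall_mem_span hX hv hw fun u hu => ?_
    refine norm_inprod_mulVec_self_le_mul_sSup X (fun c u hu => (schmidtRank_smul_le c u).trans hu)
      ⟨∑ i, ∑ j, ‖X i j‖, ?_⟩ ((schmidtRank_le_of_mem_span_kronecker_one_mulVec hu).trans hvk)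
    rintro _ ⟨v, hv, -, rfl⟩
    exact norm_inprod_mulVec_le_sum_norm X hv hv

/-- The key equality in the proof of Theorem 5.2, for Hermitian operators. -/
theorem hermitian_sup_diag_eq_sup_related (m n k : ℕ) (hm : 0 < m) (hn : 0 < n)
    (hk : 0 < k) (hkn : k ≤ n)
    (X : Matrix (Fin m × Fin n) (Fin m × Fin n) ℂ) (hX : X.IsHermitian) :
    sSup { t : ℝ | ∃ v : Fin m × Fin n → ℂ, UnitVec v ∧ SchmidtRank v ≤ k ∧
        t = ‖inprod v (X.mulVec v)‖ } =
      sSup { t : ℝ | ∃ v w : Fin m × Fin n → ℂ, UnitVec v ∧ UnitVec w ∧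
        SchmidtRank v ≤ k ∧ SchmidtRank w ≤ k ∧
        (∃ P : Matrix (Fin m) (Fin m) ℂ,
          (P ⊗ₖ (1 : Matrix (Fin n) (Fin n) ℂ)).mulVec v = w) ∧
        t = ‖inprod v (X.mulVec w)‖ } :=
  hermitian_sup_diag_eq_sup_related_general m n k X hX
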